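/- The sandpile group G(d,h) of the d-regular tree of depth h is generated by the (d−1)^h elements {x̄ᵢ : i ∈ F(d,h)}, where F(d,h) is the set consisting of, for each vertex at odd depth (if h even, together with the root) respectively each vertex at even depth (if h odd), all but one of its children. Hence rank(G(d,h)) ≤ (d−1)^h. -/

import Mathlib

namespace SandpileTree

/-- Vertices of the rooted `d`-regular tree of depth `h`: a depth `n ≤ h` together with
the path of steps from the root, padded with value `0` beyond the depth.
The step out of the root has `d` choices; each later step has `d - 1` choices. -/
def Vert (d h : ℕ) : Type :=
  {p : Fin (h + 1) × (Fin h → Fin d) //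
    (∀ i : Fin h, (p.1 : ℕ) ≤ (i : ℕ) → (p.2 i : ℕ) = 0) ∧
    (∀ i : Fin h, 0 < (i : ℕ) → (i : ℕ) < (p.1 : ℕ) → (p.2 i : ℕ) < d - 1)}

instance (d h : ℕ) : DecidableEq (Vert d h) := by unfold Vert; infer_instance
instance (d h : ℕ) : Fintype (Vert d h) := by unfold Vert; infer_instance

/-- The depth (distance from the root) of a vertex. -/
def depth {d h : ℕ} (v : Vert d h) : ℕ := (v.1.1 : ℕ)

/-- The root of the tree. -/
def root (d h : ℕ) (hd : 0 < d) : Vert d h :=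
  ⟨(0, fun _ => ⟨0, hd⟩), by constructor <;> intro i <;> simp⟩

/-- `IsParent i j` means that `i` is the parent of `j` in the rooted tree. -/
def IsParent {d h : ℕ} (i j : Vert d h) : Prop :=
  depth j = depth i + 1 ∧ ∀ k : Fin h, (k : ℕ) < depth i → j.1.2 k = i.1.2 k

instance {d h : ℕ} (i j : Vert d h) : Decidable (IsParent i j) := by
  unfold IsParent; infer_instance

/-- The row of the reduced Laplacian of the augmented tree corresponding to vertex `i`:
`δ i = d·x_i − x_{parent i} − ∑_{j child of i} x_j` (no parent term for the root, and
no children terms for the leaves, which are attached to the sink by `d-1` edges). -/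
def delta (d h : ℕ) (i : Vert d h) : Vert d h → ℤ :=
  (d : ℤ) • Pi.single i 1
    - ∑ j ∈ Finset.univ.filter (fun j => IsParent j i), Pi.single j 1
    - ∑ j ∈ Finset.univ.filter (fun j => IsParent i j), Pi.single j 1

/-- The lattice `Λ ⊆ ℤ^V` spanned by the rows of the reduced Laplacian. -/
def lat (d h : ℕ) : AddSubgroup (Vert d h → ℤ) :=
  AddSubgroup.closure (Set.range (delta d h))

/-- The sandpile group `G(d,h) = ℤ^V / Λ` of the `d`-regular tree of depth `h`. -/
abbrev SG (d h : ℕ) : Type := (Vert d h → ℤ) ⧸ lat d h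

/-- The image `x̄ᵢ` of the standard basis vector `xᵢ` in the sandpile group. -/
def xbar (d h : ℕ) (i : Vert d h) : SG d h :=
  QuotientAddGroup.mk (Pi.single i 1)

/-- `θ(d,n) = ((d-1)^n - 1)/(d-2)`. -/
def theta (d n : ℕ) : ℕ := ((d - 1) ^ n - 1) / (d - 2)

end SandpileTree

open SandpileTree

namespace SandpileTree

/-- The last step on the path from the root to `j` (this is `0` exactly when `j` is the
distinguished child `m_{p(j)}` of its parent, or the root). -/
def lastStep {d h : ℕ} (j : Vert d h) : ℕ :=
  if hj : 0 < depth j then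
    (j.1.2 ⟨depth j - 1, by have := j.1.1.isLt; unfold depth at *; omega⟩ : ℕ)
  else 0

/-- The set `F(d,h)`: for each vertex `i` at odd depth if `h` is even (together with the
root), respectively at even depth if `h` is odd, take all children of `i` except the
distinguished child `mᵢ` (the child whose last step is `0`). Thus `F(d,h)` consists of
the root (when `h` is even) together with all non-distinguished vertices whose depth has
the same parity as `h`. -/
def Fset (d h : ℕ) : Finset (Vert d h) :=
  Finset.univ.filter (fun j => depth j % 2 = h % 2 ∧ (depth j = 0 ∨ lastStep j ≠ 0))

end SandpileTree

/-!
Write `x_v` for `xbar d h v`. The row of vertex `w` gives `d x_w = x_{parent w} + ∑ x_c`, the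
sum over the children `c` of `w`. If `depth v ≢ h (mod 2)`, then `depth v < h` and `v` has a child
`w ∈ F`; the row of `w` writes `x_v` through `x_w` and grandchildren of `v`, so descending
induction on the depth puts `x_v` in the subgroup generated by `F`. A vertex `v ∉ F` with
`depth v ≡ h` is the distinguished child of its parent `u`; the row of `u` writes `x_v` through
`x_u`, the grandparent of `v` and the siblings of `v`, which lie in `F`, and ascending induction
on the depth finishes. For the count, the vertices of `F` at depth `n ≥ 1` are those with nonzero
last step: `d - 1` of them for `n = 1` and `d (d-1)^(n-2) (d-2)` for `n ≥ 2`, and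
`(d-1)^(n+2) = (d-1)^n + d (d-2) (d-1)^n` sums these over `n ≡ h` to `(d-1)^h`.
-/

namespace SandpileTree

open Finset

variable {d h : ℕ}

def parents (v : Vert d h) : Finset (Vert d h) := univ.filter (IsParent · v)

def children (v : Vert d h) : Finset (Vert d h) := univ.filter (IsParent v ·)

@[simp] theorem mem_parents {u v : Vert d h} : u ∈ parents v ↔ IsParent u v := by
  simp [parents]

@[simp] theorem mem_children {u v : Vert d h} : v ∈ children u ↔ IsParent u v := by
  simp [children]

def steps (v : Vert d h) (k : Fin h) : ℕ := v.1.2 k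

theorem steps_lt (v : Vert d h) (k : Fin h) : steps v k < d := (v.1.2 k).isLt

theorem steps_eq_zero (v : Vert d h) {k : Fin h} (hk : depth v ≤ k) : steps v k = 0 :=
  v.2.1 k hk

theorem steps_lt_pred (v : Vert d h) {k : Fin h} (hk₀ : 0 < (k : ℕ)) (hk : (k : ℕ) < depth v) :
    steps v k < d - 1 :=
  v.2.2 k hk₀ hk

theorem depth_le (v : Vert d h) : depth v ≤ h := Nat.lt_succ_iff.mp v.1.1.isLt

theorem Vert.ext {v w : Vert d h} (hdepth : depth v = depth w) (hsteps : steps v = steps w) :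
    v = w :=
  Subtype.ext <| Prod.ext (Fin.ext hdepth) <| funext fun k => Fin.ext (congrFun hsteps k)

theorem lastStep_eq_steps {v : Vert d h} (k : Fin h) (hk : (k : ℕ) + 1 = depth v) :
    lastStep v = steps v k := by
  rw [lastStep, dif_pos (by omega)]
  exact congrArg (fun k => (v.1.2 k : ℕ)) (Fin.ext (by simp; omega))

theorem IsParent.depth_eq {u v : Vert d h} (huv : IsParent u v) : depth v = depth u + 1 := huv.1

theorem IsParent.steps_eq {u v : Vert d h} (huv : IsParent u v) {k : Fin h}
    (hk : (k : ℕ) < depth u) : steps v k = steps u k :=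
  congrArg Fin.val (huv.2 k hk)

theorem IsParent.unique {u u' v : Vert d h} (hu : IsParent u v) (hu' : IsParent u' v) :
    u = u' := by
  have hdepth : depth u = depth u' := by have := hu.depth_eq; have := hu'.depth_eq; omega
  refine Vert.ext hdepth (funext fun k => ?_)
  by_cases hk : (k : ℕ) < depth u
  · rw [← hu.steps_eq hk, hu'.steps_eq (hdepth ▸ hk)]
  · rw [steps_eq_zero u (by omega), steps_eq_zero u' (by omega)]

theorem IsParent.eq_of_lastStep_eq {u v v' : Vert d h} (hv : IsParent u v) (hv' : IsParent u v')
    (hlast : lastStep v = lastStep v') : v = v' := by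
  have hdepth : depth v = depth v' := by rw [hv.depth_eq, hv'.depth_eq]
  refine Vert.ext hdepth (funext fun k => ?_)
  rcases lt_trichotomy (k : ℕ) (depth u) with hk | hk | hk
  · rw [hv.steps_eq hk, hv'.steps_eq hk]
  · rwa [← lastStep_eq_steps k (by rw [hv.depth_eq, hk]),
      ← lastStep_eq_steps k (by rw [hv'.depth_eq, hk])]
  · rw [steps_eq_zero v (by rw [hv.depth_eq]; omega),
      steps_eq_zero v' (by rw [hv'.depth_eq]; omega)]

theorem exists_isParent {v : Vert d h} (hv : 0 < depth v) : ∃ u, IsParent u v := by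
  have hvh := depth_le v
  have hd : 0 < d := (steps_lt v ⟨0, by omega⟩).trans_le' (Nat.zero_le _)
  refine ⟨⟨(⟨depth v - 1, by omega⟩,
      fun k => if (k : ℕ) < depth v - 1 then v.1.2 k else ⟨0, hd⟩), ?_, ?_⟩, ?_, ?_⟩
  · intro k hk
    simp only at hk ⊢
    rw [if_neg (by omega)]
  · intro k hk₀ hk
    simp only at hk ⊢
    rw [if_pos hk]
    exact steps_lt_pred v hk₀ (by omega)
  · show depth v = depth v - 1 + 1
    omega
  · intro k hk
    exact (if_pos hk).symm

theorem exists_isParent_lastStep_eq {v : Vert d h} (hv : depth v < h) {c : ℕ} (hc : c < d)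
    (hc' : 0 < depth v → c < d - 1) : ∃ w, IsParent v w ∧ lastStep w = c := by
  let w : Vert d h := ⟨(⟨depth v + 1, by omega⟩,
      fun k => if (k : ℕ) = depth v then ⟨c, hc⟩ else v.1.2 k), ?_, ?_⟩
  · have hvw : IsParent v w := ⟨rfl, fun k hk => if_neg (by omega)⟩
    refine ⟨w, hvw, ?_⟩
    rw [lastStep_eq_steps ⟨depth v, hv⟩ hvw.depth_eq.symm]
    exact congrArg Fin.val (if_pos rfl)
  · intro k hk
    simp only at hk ⊢
    rw [if_neg (by omega)]
    exact steps_eq_zero v (by omega)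
  · intro k hk₀ hk
    simp only at hk ⊢
    split_ifs with hkv
    · exact hc' (hkv ▸ hk₀)
    · exact steps_lt_pred v hk₀ (by omega)

theorem parents_eq_singleton {u v : Vert d h} (huv : IsParent u v) : parents v = {u} :=
  eq_singleton_iff_unique_mem.2 ⟨mem_parents.2 huv, fun _ hw => (mem_parents.1 hw).unique huv⟩

theorem closure_range_xbar : AddSubgroup.closure (Set.range (xbar d h)) = ⊤ := by
  have hsingle :
      AddSubgroup.closure (Set.range fun v : Vert d h => (Pi.single v 1 : Vert d h → ℤ)) = ⊤ := by
    rw [← Submodule.span_int_eq_addSubgroupClosure, Submodule.toAddSubgroup_eq_top]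
    simp only [← Pi.basisFun_apply ℤ (Vert d h)]
    exact (Pi.basisFun ℤ (Vert d h)).span_eq
  rw [show xbar d h = QuotientAddGroup.mk' (lat d h) ∘ fun v => Pi.single v 1 from rfl,
    Set.range_comp, ← AddMonoidHom.map_closure, hsingle,
    AddSubgroup.map_top_of_surjective _ (QuotientAddGroup.mk'_surjective _)]

theorem zsmul_xbar_eq_sum (v : Vert d h) :
    (d : ℤ) • xbar d h v = ∑ u ∈ parents v, xbar d h u + ∑ w ∈ children v, xbar d h w := by
  have hdelta : QuotientAddGroup.mk' (lat d h) (delta d h v) = 0 :=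
    (QuotientAddGroup.eq_zero_iff _).2 (AddSubgroup.subset_closure (Set.mem_range_self v))
  rw [delta, map_sub, map_sub, map_zsmul, map_sum, map_sum, sub_sub, sub_eq_zero] at hdelta
  exact hdelta

def closureF (d h : ℕ) : AddSubgroup (SG d h) :=
  AddSubgroup.closure (xbar d h '' (Fset d h : Set (Vert d h)))

theorem mem_Fset {v : Vert d h} :
    v ∈ Fset d h ↔ depth v % 2 = h % 2 ∧ (depth v = 0 ∨ lastStep v ≠ 0) := by
  simp [Fset]

theorem xbar_mem_closureF {v : Vert d h} (hv : v ∈ Fset d h) : xbar d h v ∈ closureF d h :=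
  AddSubgroup.subset_closure (Set.mem_image_of_mem _ hv)

theorem xbar_mem_closureF_of_depth_mod_ne (hd : 3 ≤ d) (v : Vert d h)
    (hv : depth v % 2 ≠ h % 2) : xbar d h v ∈ closureF d h := by
  have hvh : depth v < h := (depth_le v).lt_of_ne fun hvh => hv (by rw [hvh])
  obtain ⟨w, hvw, hw⟩ := exists_isParent_lastStep_eq hvh (c := 1) (by omega) fun _ => by omega
  have hwF : w ∈ Fset d h := mem_Fset.2 ⟨by rw [hvw.depth_eq]; omega, .inr (by omega)⟩
  have hchildren : ∑ c ∈ children w, xbar d h c ∈ closureF d h := sum_mem fun c hc =>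
    have hc := (mem_children.1 hc).depth_eq
    xbar_mem_closureF_of_depth_mod_ne hd c (by rw [hc, hvw.depth_eq]; omega)
  have hrel := zsmul_xbar_eq_sum w
  rw [parents_eq_singleton hvw, sum_singleton] at hrel
  rw [eq_sub_of_add_eq hrel.symm]
  exact sub_mem (zsmul_mem (xbar_mem_closureF hwF) _) hchildren
termination_by h - depth v
decreasing_by all_goals (rw [hc, hvw.depth_eq]; have := depth_le c; omega)

theorem xbar_mem_closureF_of_depth_mod_eq (hd : 3 ≤ d) (v : Vert d h)
    (hv : depth v % 2 = h % 2) : xbar d h v ∈ closureF d h := by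
  by_cases hvF : v ∈ Fset d h
  · exact xbar_mem_closureF hvF
  obtain ⟨hv₀, hlast⟩ : 0 < depth v ∧ lastStep v = 0 := by
    simp only [mem_Fset, hv, true_and, not_or, not_not] at hvF
    exact ⟨Nat.pos_of_ne_zero hvF.1, hvF.2⟩
  obtain ⟨u, huv⟩ := exists_isParent hv₀
  have hu := xbar_mem_closureF_of_depth_mod_ne hd u (by rw [huv.depth_eq] at hv; omega)
  have hparents : ∑ w ∈ parents u, xbar d h w ∈ closureF d h := sum_mem fun w hw =>
    have hw := (mem_parents.1 hw).depth_eq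
    xbar_mem_closureF_of_depth_mod_eq hd w (by rw [huv.depth_eq, hw] at hv; omega)
  have hsiblings : ∑ c ∈ (children u).erase v, xbar d h c ∈ closureF d h :=
    sum_mem fun c hc => by
      obtain ⟨hcv, huc⟩ := mem_erase.1 hc
      rw [mem_children] at huc
      refine xbar_mem_closureF (mem_Fset.2 ⟨by rwa [huc.depth_eq, ← huv.depth_eq], .inr ?_⟩)
      exact fun hc₀ => hcv (huc.eq_of_lastStep_eq huv (hc₀.trans hlast.symm))
  have hrel := zsmul_xbar_eq_sum u
  rw [← add_sum_erase _ _ (mem_children.2 huv)] at hrel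
  have hxv : xbar d h v = (d : ℤ) • xbar d h u - ∑ w ∈ parents u, xbar d h w
      - ∑ c ∈ (children u).erase v, xbar d h c := by
    rw [hrel]; abel
  rw [hxv]
  exact sub_mem (sub_mem (zsmul_mem hu _) hparents) hsiblings
termination_by depth v
decreasing_by rw [huv.depth_eq, hw]; omega

theorem closureF_eq_top (hd : 3 ≤ d) : closureF d h = ⊤ := by
  rw [eq_top_iff, ← closure_range_xbar, AddSubgroup.closure_le]
  rintro _ ⟨v, rfl⟩
  by_cases hv : depth v % 2 = h % 2
  · exact xbar_mem_closureF_of_depth_mod_eq hd v hv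
  · exact xbar_mem_closureF_of_depth_mod_ne hd v hv

/-- The values taken by the `i`-th step of the vertices at depth `n` with nonzero last step. -/
def stepRange (d n i : ℕ) : Finset ℕ :=
  Ico (if i + 1 = n then 1 else 0) (if n ≤ i then 1 else if i = 0 then d else d - 1)

theorem mem_stepRange (hd : 0 < d) {n i x : ℕ} :
    x ∈ stepRange d n i ↔
      x < d ∧ (n ≤ i → x = 0) ∧ (0 < i → i < n → x < d - 1) ∧ (i + 1 = n → x ≠ 0) := by
  simp only [stepRange, mem_Ico]
  split_ifs <;> omega

theorem card_depth_eq_lastStep_ne_zero (hd : 0 < d) {n : ℕ} (hn : 0 < n) (hnh : n ≤ h) :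
    #{v : Vert d h | depth v = n ∧ lastStep v ≠ 0} = ∏ i ∈ range h, #(stepRange d n i) := by
  rw [← Fin.prod_univ_eq_prod_range (fun i => #(stepRange d n i)), ← Fintype.card_piFinset]
  refine card_bij (fun v _ => steps v) ?_ ?_ ?_
  · intro v hv
    obtain ⟨hvn, hlast⟩ := (mem_filter.1 hv).2
    refine Fintype.mem_piFinset.2 fun k => (mem_stepRange hd).2 ⟨steps_lt v k,
      fun hk => steps_eq_zero v (by omega), fun hk₀ hk => steps_lt_pred v hk₀ (by omega),
      fun hk => ?_⟩
    rwa [← lastStep_eq_steps k (by omega)]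
  · intro v hv w hw hvw
    exact Vert.ext (((mem_filter.1 hv).2.1).trans ((mem_filter.1 hw).2.1).symm) hvw
  · intro f hf
    simp only [Fintype.mem_piFinset, mem_stepRange hd] at hf
    let v : Vert d h := ⟨(⟨n, by omega⟩, fun k => ⟨f k, (hf k).1⟩), fun k hk => (hf k).2.1 hk,
      fun k hk₀ hk => (hf k).2.2.1 hk₀ hk⟩
    have hlast : lastStep v ≠ 0 := by
      rw [lastStep_eq_steps (v := v) ⟨n - 1, by omega⟩ (show n - 1 + 1 = n by omega)]
      exact (hf _).2.2.2 (show n - 1 + 1 = n by omega)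
    exact ⟨v, mem_filter.2 ⟨mem_univ _, rfl, hlast⟩, rfl⟩

/-- The number of vertices of `F(d,h)` at depth `n`, when `n ≡ h (mod 2)`. -/
def layerCardF (d n : ℕ) : ℕ :=
  if n = 0 then 1 else if n = 1 then d - 1 else d * (d - 1) ^ (n - 2) * (d - 2)

theorem prod_card_stepRange (hd : 2 ≤ d) {n : ℕ} (hn : 0 < n) (hnh : n ≤ h) :
    ∏ i ∈ range h, #(stepRange d n i) = layerCardF d n := by
  have hcard (i : ℕ) : #(stepRange d n i) =
      (if n ≤ i then 1 else if i = 0 then d else d - 1) - (if i + 1 = n then 1 else 0) :=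
    Nat.card_Ico _ _
  rw [← prod_subset (range_subset_range.2 hnh) fun i _ hi => by
    rw [mem_range] at hi
    rw [hcard]
    split_ifs <;> omega]
  obtain rfl | ⟨m, rfl⟩ : n = 1 ∨ ∃ m, n = m + 2 := by
    rcases n with _ | _ | m <;> simp_all
  · simp [hcard, layerCardF]
  · have hmiddle : ∀ i ∈ range m, #(stepRange d (m + 2) (i + 1)) = d - 1 := fun i hi => by
      rw [mem_range] at hi
      rw [hcard, if_neg i.succ_ne_zero]
      split_ifs <;> omega
    rw [layerCardF, if_neg (by omega), if_neg (by omega), Nat.add_sub_cancel, prod_range_succ,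
      prod_range_succ', prod_congr rfl hmiddle, prod_const, card_range, hcard, hcard]
    simp only [if_neg (by omega : ¬m + 2 ≤ 0), if_neg (by omega : ¬m + 2 ≤ m + 1),
      if_neg (by omega : 0 + 1 ≠ m + 2), if_neg (by omega : m + 1 ≠ 0), ite_true, Nat.sub_zero,
      Nat.sub_sub]
    ring

theorem eq_root_of_depth_eq_zero (hd : 0 < d) {v : Vert d h} (hv : depth v = 0) :
    v = root d h hd :=
  Vert.ext hv (funext fun k => steps_eq_zero v (by omega))

theorem card_filter_Fset_depth_eq (hd : 2 ≤ d) {n : ℕ} (hnh : n ≤ h) :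
    #{v ∈ Fset d h | depth v = n} = if n % 2 = h % 2 then layerCardF d n else 0 := by
  split_ifs with hn
  · rcases n.eq_zero_or_pos with rfl | hn₀
    · refine card_eq_one.2 ⟨root d h (by omega), eq_singleton_iff_unique_mem.2 ⟨?_, ?_⟩⟩
      · exact mem_filter.2 ⟨mem_Fset.2 ⟨hn, .inl rfl⟩, rfl⟩
      · exact fun v hv => eq_root_of_depth_eq_zero (by omega) (mem_filter.1 hv).2
    · have hlayer : (Fset d h).filter (depth · = n) =
          univ.filter fun v : Vert d h => depth v = n ∧ lastStep v ≠ 0 := by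
        ext v
        simp only [mem_filter, mem_univ, true_and, mem_Fset]
        constructor
        · rintro ⟨⟨-, hv | hv⟩, rfl⟩ <;> omega
        · rintro ⟨rfl, hv⟩
          exact ⟨⟨hn, .inr hv⟩, rfl⟩
      rw [hlayer, card_depth_eq_lastStep_ne_zero (by omega) hn₀ hnh,
        prod_card_stepRange hd hn₀ hnh]
  · exact card_eq_zero.2 (filter_eq_empty_iff.2 fun v hv hvn => hn (hvn ▸ (mem_Fset.1 hv).1))

theorem sum_layerCardF (hd : 2 ≤ d) (m : ℕ) :
    ∑ n ∈ range (m + 1), (if n % 2 = m % 2 then layerCardF d n else 0) = (d - 1) ^ m := by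
  induction m using Nat.twoStepInduction with
  | zero => simp [layerCardF]
  | one => simp [sum_range_succ, layerCardF]
  | more m ih _ =>
    rw [sum_range_succ, sum_range_succ, Nat.add_mod_right, ih, if_neg (by omega), if_pos rfl,
      layerCardF, if_neg (by omega), if_neg (by omega), Nat.add_sub_cancel]
    obtain ⟨e, rfl⟩ : ∃ e, d = e + 2 := ⟨d - 2, by omega⟩
    rw [show e + 2 - 1 = e + 1 by omega, Nat.add_sub_cancel]
    ring

theorem card_Fset (hd : 2 ≤ d) : #(Fset d h) = (d - 1) ^ h := by
  rw [card_eq_sum_card_fiberwise (f := depth) (t := range (h + 1))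
      fun v _ => mem_range.2 (Nat.lt_succ_of_le (depth_le v)), ← sum_layerCardF hd h]
  exact sum_congr rfl fun n hn =>
    card_filter_Fset_depth_eq hd (Nat.lt_succ_iff.1 (mem_range.1 hn))

end SandpileTree

theorem generated_by_F_general (d h : ℕ) (hd : 3 ≤ d) :
    (Fset d h).card = (d - 1) ^ h ∧
    AddSubgroup.closure (xbar d h '' (Fset d h : Set (Vert d h))) = ⊤ :=
  ⟨SandpileTree.card_Fset (by omega), SandpileTree.closureF_eq_top hd⟩

/-- The sandpile group `G(d,h)` of the `d`-regular tree of depth `h` is generated by the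
`(d−1)^h` elements `{x̄ᵢ : i ∈ F(d,h)}`; hence `rank(G(d,h)) ≤ (d−1)^h`. -/
theorem generated_by_F (d h : ℕ) (hd : 3 ≤ d) (hh : 1 ≤ h) :
    (Fset d h).card = (d - 1) ^ h ∧
    AddSubgroup.closure (xbar d h '' (Fset d h : Set (Vert d h))) = ⊤ :=
  generated_by_F_general d h hd
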